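/- The metric space (M̄^b, d̄^b) is complete: every Cauchy sequence {μ̄_n} in M̄^b (measurable families of finite measures on 𝕋 with mass ≤ b, with the metric d̄^b(μ̄,κ̄) = sup_{B∈𝒢} sup_x ∫_Ω d_BL(μ^y,κ^y) dν_x^B(y)) converges in d̄^b to a limit μ̄ ∈ M̄^b. -/

import Mathlib

open MeasureTheory Filter
open scoped ENNReal NNReal Topology

instance : Fact (0 < 2 * Real.pi) := ⟨by positivity⟩

noncomputable abbrev Circle2pi := AddCircle (2 * Real.pi)

/-- The bounded-Lipschitz distance on finite measures on the circle. -/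
noncomputable def dBL (μ κ : Measure Circle2pi) : ℝ :=
  ⨆ f : {f : Circle2pi → ℝ // LipschitzWith 1 f ∧ ∀ v, f v ∈ Set.Icc (0:ℝ) 1},
    |(∫ v, f.1 v ∂μ) - ∫ v, f.1 v ∂κ|

/-- The collection `𝒢` of fiber-measure families of graphops with `γ_B ≤ 1`. -/
def GraphopFibers (Ω : Type*) [MeasurableSpace Ω] : Set (Ω → Measure Ω) :=
  {η | (∀ x, η x Set.univ ≤ 1) ∧
    ∃ l : Measure Ω, IsProbabilityMeasure l ∧
      ∀ S S' : Set Ω, MeasurableSet S → MeasurableSet S' →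
        ∫⁻ x in S, η x S' ∂l = ∫⁻ x in S', η x S ∂l}

/-- The metric `d̄^b` on measure families. -/
noncomputable def dbarb {Ω : Type*} [MeasurableSpace Ω]
    (μ κ : Ω → Measure Circle2pi) : ℝ :=
  ⨆ η : GraphopFibers Ω, ⨆ x : Ω, ∫ y, dBL (μ y) (κ y) ∂(η.1 x)

/-- Membership in `M̄^b`: a measurable family of finite measures on `𝕋` with mass `≤ b`. -/
def MemMb {Ω : Type*} [MeasurableSpace Ω] (b : ℝ) (μ : Ω → Measure Circle2pi) : Prop :=
  (∀ S : Set Circle2pi, MeasurableSet S → Measurable fun x => (μ x S).toReal) ∧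
    ∀ x, μ x Set.univ ≤ ENNReal.ofReal b

/-!
Testing `dbarb` against the Dirac family `x ↦ δ_x`, which lies in `GraphopFibers`, shows that a
`dbarb`-Cauchy sequence of families is `dBL`-Cauchy uniformly in the fibre. In each fibre, the
measures of mass `≤ b` on the compact circle form a weakly compact set, so the sequence has a weak
cluster point; since the integrals of each test function of `dBL` converge along the sequence, the
cluster point is a `dBL`-limit, at a rate uniform in the fibre, and `dbarb` is bounded by the
supremum of the fibrewise distances. The limit family is measurable because its integrals against
Lipschitz functions are pointwise limits of measurable functions and determine the measures of
closed sets through thickened indicators. Integrating `dBL` against Dirac masses needs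
`y ↦ dBL (μ y) (κ y)` to be measurable: it is a supremum over a countable dense set of test
functions.
-/

open Set TopologicalSpace

abbrev BLTestFn := {f : Circle2pi → ℝ // LipschitzWith 1 f ∧ ∀ v, f v ∈ Icc (0 : ℝ) 1}

abbrev BLTestMap := {f : C(Circle2pi, ℝ) // LipschitzWith 1 f ∧ ∀ v, f v ∈ Icc (0 : ℝ) 1}

noncomputable def BLTestFn.equivTestMap : BLTestFn ≃ BLTestMap where
  toFun f := ⟨⟨f.1, f.2.1.continuous⟩, f.2⟩
  invFun f := ⟨f.1, f.2⟩

instance : Nonempty BLTestFn := ⟨⟨0, LipschitzWith.const' 0, fun _ => ⟨le_rfl, zero_le_one⟩⟩⟩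

instance : Nonempty BLTestMap := BLTestFn.equivTestMap.symm.nonempty

section CompactSpace

variable {X : Type*} [TopologicalSpace X] [CompactSpace X] [MeasurableSpace X]
  [OpensMeasurableSpace X] (μ : Measure X) [IsFiniteMeasure μ]

lemma integral_mem_Icc_of_mem_Icc {f : X → ℝ} (hf : Continuous f)
    (h01 : ∀ v, f v ∈ Icc (0 : ℝ) 1) : ∫ v, f v ∂μ ∈ Icc 0 (μ.real univ) := by
  refine ⟨integral_nonneg fun v => (h01 v).1, ?_⟩
  have hint : Integrable f μ :=
    (BoundedContinuousFunction.mkOfCompact ⟨f, hf⟩).integrable μ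
  simpa using integral_mono hint (integrable_const 1) fun v => (h01 v).2

lemma continuous_integral_continuousMap : Continuous fun f : C(X, ℝ) => ∫ v, f v ∂μ := by
  refine (LipschitzWith.of_dist_le_mul fun f g => ?_ :
    LipschitzWith ⟨μ.real univ, measureReal_nonneg⟩ _).continuous
  have hint (h : C(X, ℝ)) : Integrable h μ :=
    (BoundedContinuousFunction.mkOfCompact h).integrable μ
  change dist _ _ ≤ μ.real univ * dist f g
  rw [dist_eq_norm, dist_eq_norm, ← integral_sub (hint f) (hint g)]
  exact (norm_integral_le_of_norm_le_const (.of_forall (f - g).norm_coe_le_norm)).trans_eq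
    (mul_comm _ _)

end CompactSpace

section dBL

variable {μ κ : Measure Circle2pi}

lemma abs_integral_sub_le_measureReal_add [IsFiniteMeasure μ] [IsFiniteMeasure κ] (f : BLTestFn) :
    |∫ v, f.1 v ∂μ - ∫ v, f.1 v ∂κ| ≤ μ.real univ + κ.real univ := by
  have hμ := integral_mem_Icc_of_mem_Icc μ f.2.1.continuous f.2.2
  have hκ := integral_mem_Icc_of_mem_Icc κ f.2.1.continuous f.2.2
  rw [abs_sub_le_iff]
  constructor <;> linarith [hμ.1, hμ.2, hκ.1, hκ.2]

lemma abs_integral_sub_le_dBL [IsFiniteMeasure μ] [IsFiniteMeasure κ] (f : BLTestFn) :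
    |∫ v, f.1 v ∂μ - ∫ v, f.1 v ∂κ| ≤ dBL μ κ :=
  le_ciSup ⟨_, forall_mem_range.2 abs_integral_sub_le_measureReal_add⟩ f

lemma dBL_le_of_forall {c : ℝ} (h : ∀ f : BLTestFn, |∫ v, f.1 v ∂μ - ∫ v, f.1 v ∂κ| ≤ c) :
    dBL μ κ ≤ c :=
  ciSup_le h

lemma dBL_nonneg [IsFiniteMeasure μ] [IsFiniteMeasure κ] : 0 ≤ dBL μ κ :=
  (abs_nonneg _).trans (abs_integral_sub_le_dBL (Classical.arbitrary _))

lemma dBL_le_measureReal_add [IsFiniteMeasure μ] [IsFiniteMeasure κ] :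
    dBL μ κ ≤ μ.real univ + κ.real univ :=
  dBL_le_of_forall abs_integral_sub_le_measureReal_add

lemma dBL_eq_iSup_denseSeq [IsFiniteMeasure μ] [IsFiniteMeasure κ] :
    dBL μ κ = ⨆ n, |∫ v, (denseSeq BLTestMap n).1 v ∂μ - ∫ v, (denseSeq BLTestMap n).1 v ∂κ| := by
  have hcont : Continuous fun f : BLTestMap => |∫ v, f.1 v ∂μ - ∫ v, f.1 v ∂κ| :=
    (((continuous_integral_continuousMap μ).sub
      (continuous_integral_continuousMap κ)).comp continuous_subtype_val).abs
  rw [← iSup_range' (fun f : BLTestMap => |∫ v, f.1 v ∂μ - ∫ v, f.1 v ∂κ|),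
    (denseRange_denseSeq BLTestMap).ciSup' hcont]
  exact BLTestFn.equivTestMap.iSup_congr fun _ => rfl

lemma exists_blTestFn_integral_eq_mul {K : ℝ≥0} {g : Circle2pi → ℝ} (hg : LipschitzWith K g)
    (h01 : ∀ v, g v ∈ Icc (0 : ℝ) 1) :
    ∃ f : BLTestFn, ∀ ν : Measure Circle2pi, ∫ v, g v ∂ν = max 1 K * ∫ v, f.1 v ∂ν := by
  set c : ℝ≥0 := max 1 K
  have hc : (0 : ℝ) < c := zero_lt_one.trans_le (le_max_left 1 K)
  refine ⟨⟨fun v => (c : ℝ)⁻¹ * g v, ?_, fun v => ⟨?_, ?_⟩⟩, fun ν => ?_⟩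
  · refine ((lipschitzWith_smul (c : ℝ)⁻¹).comp hg).weaken ?_
    simpa using inv_mul_le_one_of_le₀ (le_max_right 1 K) c.2
  · have := (h01 v).1
    positivity
  · exact inv_mul_le_one_of_le₀ ((h01 v).2.trans (by exact_mod_cast le_max_left 1 K)) hc.le
  · rw [← integral_const_mul]
    simp [hc.ne']

lemma tendsto_integral_of_lipschitzWith {ρ : ℕ → Measure Circle2pi}
    (hlim : ∀ f : BLTestFn, Tendsto (fun n => ∫ v, f.1 v ∂ρ n) atTop (𝓝 (∫ v, f.1 v ∂μ)))
    {K : ℝ≥0} {g : Circle2pi → ℝ} (hg : LipschitzWith K g) (h01 : ∀ v, g v ∈ Icc (0 : ℝ) 1) :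
    Tendsto (fun n => ∫ v, g v ∂ρ n) atTop (𝓝 (∫ v, g v ∂μ)) := by
  obtain ⟨f, hf⟩ := exists_blTestFn_integral_eq_mul hg h01
  simpa only [hf] using (hlim f).const_mul _

end dBL

section Completeness

variable {ρ : ℕ → Measure Circle2pi} [∀ n, IsFiniteMeasure (ρ n)]

lemma cauchySeq_integral_of_dBL (hcauchy : ∀ ε > 0, ∃ N, ∀ i ≥ N, ∀ j ≥ N, dBL (ρ i) (ρ j) ≤ ε)
    (f : BLTestFn) : CauchySeq fun n => ∫ v, f.1 v ∂ρ n := by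
  refine Metric.cauchySeq_iff.2 fun ε hε => ?_
  obtain ⟨N, hN⟩ := hcauchy (ε / 2) (half_pos hε)
  exact ⟨N, fun i hi j hj => (abs_integral_sub_le_dBL f).trans_lt
    ((hN i hi j hj).trans_lt (half_lt_self hε))⟩

theorem exists_tendsto_integral_of_dBL {B : ℝ≥0} (hmass : ∀ n, ρ n univ ≤ B)
    (hcauchy : ∀ ε > 0, ∃ N, ∀ i ≥ N, ∀ j ≥ N, dBL (ρ i) (ρ j) ≤ ε) :
    ∃ μ : Measure Circle2pi, IsFiniteMeasure μ ∧ μ univ ≤ B ∧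
      ∀ f : BLTestFn, Tendsto (fun n => ∫ v, f.1 v ∂ρ n) atTop (𝓝 (∫ v, f.1 v ∂μ)) := by
  let ν (n : ℕ) : FiniteMeasure Circle2pi := ⟨ρ n, inferInstance⟩
  obtain ⟨μ, hμB, hμ⟩ := (isCompact_setOfPred_finiteMeasure_le_of_compactSpace Circle2pi B)
    |>.exists_mapClusterPt (f := atTop) (u := ν) <| tendsto_principal.2 <| .of_forall fun n => by
      change (ν n).mass ≤ B
      rw [← ENNReal.coe_le_coe, FiniteMeasure.ennreal_mass]
      exact hmass n
  refine ⟨μ, inferInstance, by simpa [← ENNReal.coe_le_coe] using hμB, fun f => ?_⟩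
  obtain ⟨L, hL⟩ := cauchySeq_tendsto_of_complete (cauchySeq_integral_of_dBL hcauchy f)
  have hcont := FiniteMeasure.continuous_integral_boundedContinuousFunction
    (BoundedContinuousFunction.mkOfCompact ⟨f.1, f.2.1.continuous⟩)
  have hcluster : MapClusterPt (∫ v, f.1 v ∂μ) atTop fun n => ∫ v, f.1 v ∂ρ n :=
    hμ.tendsto_comp (hcont.tendsto μ)
  rwa [eq_of_nhds_neBot (ClusterPt.mono hcluster hL)]

lemma dBL_le_of_tendsto {μ : Measure Circle2pi} [IsFiniteMeasure μ]
    (hlim : ∀ f : BLTestFn, Tendsto (fun n => ∫ v, f.1 v ∂ρ n) atTop (𝓝 (∫ v, f.1 v ∂μ)))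
    {n N : ℕ} {ε : ℝ} (hN : ∀ m ≥ N, dBL (ρ n) (ρ m) ≤ ε) : dBL (ρ n) μ ≤ ε :=
  dBL_le_of_forall fun f => le_of_tendsto ((tendsto_const_nhds.sub (hlim f)).abs)
    (eventually_atTop.2 ⟨N, fun m hm => (abs_integral_sub_le_dBL f).trans (hN m hm)⟩)

end Completeness

section Families

variable {Ω : Type*} [MeasurableSpace Ω]

lemma measurable_integral_of_measurable_measure {α : Type*} [MeasurableSpace α]
    {μ : Ω → Measure α} (hμ : Measurable μ) {f : α → ℝ} (hf : StronglyMeasurable f) :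
    Measurable fun x => ∫ v, f v ∂μ x :=
  (hf.integral_kernel (κ := ⟨μ, hμ⟩)).measurable

lemma measurable_dBL {μ κ : Ω → Measure Circle2pi} [∀ x, IsFiniteMeasure (μ x)]
    [∀ x, IsFiniteMeasure (κ x)] (hμ : Measurable μ) (hκ : Measurable κ) :
    Measurable fun x => dBL (μ x) (κ x) := by
  simp_rw [dBL_eq_iSup_denseSeq]
  refine Measurable.iSup fun n => (Measurable.sub ?_ ?_).abs <;>
    exact measurable_integral_of_measurable_measure ‹_›
      (denseSeq BLTestMap n).1.continuous.stronglyMeasurable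

theorem measurable_of_tendsto_integral {μs : ℕ → Ω → Measure Circle2pi}
    {μ : Ω → Measure Circle2pi} [∀ x, IsFiniteMeasure (μ x)] (hμs : ∀ n, Measurable (μs n))
    (hlim : ∀ x, ∀ f : BLTestFn,
      Tendsto (fun n => ∫ v, f.1 v ∂μs n x) atTop (𝓝 (∫ v, f.1 v ∂μ x))) :
    Measurable μ := by
  have hint {K : ℝ≥0} {g : Circle2pi → ℝ} (hg : LipschitzWith K g)
      (h01 : ∀ v, g v ∈ Icc (0 : ℝ) 1) : Measurable fun x => ∫ v, g v ∂μ x :=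
    measurable_of_tendsto_metrizable
      (fun n => measurable_integral_of_measurable_measure (hμs n) hg.continuous.stronglyMeasurable)
      (tendsto_pi_nhds.2 fun x => tendsto_integral_of_lipschitzWith (hlim x) hg h01)
  have hclosed (F : Set Circle2pi) (hF : IsClosed F) : Measurable fun x => μ x F := by
    have hδ (n : ℕ) : (0 : ℝ) < 1 / (n + 1) := Nat.one_div_pos_of_nat
    have hreal : Measurable fun x => (μ x).real F :=
      measurable_of_tendsto_metrizable
        (fun n => hint
          (NNReal.isometry_coe.lipschitz.comp (lipschitzWith_thickenedIndicator (hδ n) F))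
          fun v => ⟨NNReal.coe_nonneg _, by exact_mod_cast thickenedIndicator_le_one (hδ n) F v⟩)
        (tendsto_pi_nhds.2 fun x => tendsto_integral_thickenedIndicator_of_isClosed (μ x) hF hδ
          tendsto_one_div_add_atTop_nhds_zero_nat)
    simpa only [ofReal_measureReal (measure_ne_top _ F)] using hreal.ennreal_ofReal
  have hgen : (inferInstance : MeasurableSpace Circle2pi) = .generateFrom {F | IsClosed F} := by
    rw [BorelSpace.measurable_eq (α := Circle2pi), borel_eq_generateFrom_isClosed]
  exact .measure_of_isPiSystem hgen isPiSystem_isClosed hclosed (hclosed univ isClosed_univ)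

variable {b : ℝ} {μ κ : Ω → Measure Circle2pi}

lemma MemMb.isFiniteMeasure (h : MemMb b μ) (x : Ω) : IsFiniteMeasure (μ x) :=
  ⟨(h.2 x).trans_lt ENNReal.ofReal_lt_top⟩

lemma MemMb.measurable (h : MemMb b μ) : Measurable μ := by
  have := h.isFiniteMeasure
  refine Measure.measurable_of_measurable_coe _ fun S hS => ?_
  simpa only [ENNReal.ofReal_toReal (measure_ne_top _ S)] using (h.1 S hS).ennreal_ofReal

lemma memMb_of_measurable (hμ : Measurable μ) (hb : ∀ x, μ x univ ≤ ENNReal.ofReal b) :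
    MemMb b μ :=
  ⟨fun _ hS => ((Measure.measurable_coe hS).comp hμ).ennreal_toReal, hb⟩

lemma MemMb.dBL_le (hμ : MemMb b μ) (hκ : MemMb b κ) (x : Ω) :
    dBL (μ x) (κ x) ≤ 2 * max b 0 := by
  have := hμ.isFiniteMeasure
  have := hκ.isFiniteMeasure
  have hmass {ν : Ω → Measure Circle2pi} (hν : MemMb b ν) : (ν x).real univ ≤ max b 0 := by
    rw [← ENNReal.toReal_ofReal']
    exact ENNReal.toReal_mono ENNReal.ofReal_ne_top (hν.2 x)
  linarith [dBL_le_measureReal_add (μ := μ x) (κ := κ x), hmass hμ, hmass hκ]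

end Families

section Dbarb

variable {Ω : Type*} [MeasurableSpace Ω]

lemma dirac_mem_graphopFibers [Nonempty Ω] : (Measure.dirac : Ω → Measure Ω) ∈ GraphopFibers Ω := by
  refine ⟨fun x => by simp, Measure.dirac (Classical.arbitrary Ω), inferInstance, ?_⟩
  have hdirac {S S' : Set Ω} (hS' : MeasurableSet S') (l : Measure Ω) :
      ∫⁻ x in S, Measure.dirac x S' ∂l = l.restrict S S' := by
    simp_rw [Measure.dirac_apply' _ hS']
    exact lintegral_indicator_one hS'
  intro S S' hS hS'
  rw [hdirac hS', hdirac hS, Measure.restrict_apply hS', Measure.restrict_apply hS, inter_comm]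

lemma integral_le_of_forall_le_of_measure_univ_le_one {m : Measure Ω} (hm : m univ ≤ 1)
    {g : Ω → ℝ} {c : ℝ} (hc : 0 ≤ c) (h : ∀ y, g y ≤ c) : ∫ y, g y ∂m ≤ c := by
  have : IsFiniteMeasure m := ⟨hm.trans_lt ENNReal.one_lt_top⟩
  by_cases hg : Integrable g m
  · calc ∫ y, g y ∂m ≤ ∫ _, c ∂m := integral_mono hg (integrable_const c) h
      _ = m.real univ * c := by rw [integral_const, smul_eq_mul]
      _ ≤ 1 * c := by
        gcongr
        exact ENNReal.toReal_le_of_le_ofReal zero_le_one (by simpa using hm)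
      _ = c := one_mul c
  · rw [integral_undef hg]
    exact hc

variable {b : ℝ} {μ κ : Ω → Measure Circle2pi}

lemma dbarb_le_of_forall_dBL_le {c : ℝ} (hc : 0 ≤ c) (h : ∀ y, dBL (μ y) (κ y) ≤ c) :
    dbarb μ κ ≤ c :=
  Real.iSup_le (fun η => Real.iSup_le
    (fun x => integral_le_of_forall_le_of_measure_univ_le_one (η.2.1 x) hc h) hc) hc

lemma MemMb.dBL_le_dbarb [Nonempty Ω] (hμ : MemMb b μ) (hκ : MemMb b κ) (x : Ω) :
    dBL (μ x) (κ x) ≤ dbarb μ κ := by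
  have := hμ.isFiniteMeasure
  have := hκ.isFiniteMeasure
  have hbound (η : GraphopFibers Ω) (x : Ω) :
      ∫ y, dBL (μ y) (κ y) ∂η.1 x ≤ 2 * max b 0 :=
    integral_le_of_forall_le_of_measure_univ_le_one (η.2.1 x) (by positivity) (hμ.dBL_le hκ)
  let δ : GraphopFibers Ω := ⟨_, dirac_mem_graphopFibers⟩
  calc dBL (μ x) (κ x) = ∫ y, dBL (μ y) (κ y) ∂δ.1 x :=
        (integral_dirac' _ x (measurable_dBL hμ.measurable hκ.measurable).stronglyMeasurable).symm
    _ ≤ ⨆ x, ∫ y, dBL (μ y) (κ y) ∂δ.1 x :=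
        le_ciSup ⟨_, forall_mem_range.2 (hbound δ)⟩ x
    _ ≤ dbarb μ κ :=
        le_ciSup ⟨_, forall_mem_range.2 fun η => Real.iSup_le (hbound η) (by positivity)⟩ δ

end Dbarb

theorem Mb_complete_general
    {Ω : Type*} [MeasurableSpace Ω] [Nonempty Ω]
    (b : ℝ)
    (μs : ℕ → Ω → Measure Circle2pi)
    (hmem : ∀ n, MemMb b (μs n))
    (hcauchy : ∀ ε > (0:ℝ), ∃ N, ∀ i ≥ N, ∀ j ≥ N, dbarb (μs i) (μs j) < ε) :
    ∃ μ : Ω → Measure Circle2pi, MemMb b μ ∧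
      Tendsto (fun n => dbarb (μs n) μ) atTop (𝓝 0) := by
  have := fun n => (hmem n).isFiniteMeasure
  have hfibre (x : Ω) : ∀ ε > 0, ∃ N, ∀ i ≥ N, ∀ j ≥ N, dBL (μs i x) (μs j x) ≤ ε :=
    fun ε hε => (hcauchy ε hε).imp fun N hN i hi j hj =>
      ((hmem i).dBL_le_dbarb (hmem j) x).trans (hN i hi j hj).le
  choose μ hμfin hμmass hlim using fun x =>
    exists_tendsto_integral_of_dBL (B := b.toNNReal) (fun n => (hmem n).2 x) (hfibre x)
  have hμ : MemMb b μ :=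
    memMb_of_measurable (measurable_of_tendsto_integral (fun n => (hmem n).measurable) hlim) hμmass
  refine ⟨μ, hμ, Metric.tendsto_atTop.2 fun ε hε => ?_⟩
  obtain ⟨N, hN⟩ := hcauchy (ε / 2) (half_pos hε)
  refine ⟨N, fun n hn => ?_⟩
  have hle : dbarb (μs n) μ ≤ ε / 2 :=
    dbarb_le_of_forall_dBL_le (half_pos hε).le fun x =>
      dBL_le_of_tendsto (hlim x) fun m hm =>
        ((hmem n).dBL_le_dbarb (hmem m) x).trans (hN n hn m hm).le
  have hnonneg : 0 ≤ dbarb (μs n) μ :=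
    dBL_nonneg.trans ((hmem n).dBL_le_dbarb hμ (Classical.arbitrary Ω))
  rw [Real.dist_0_eq_abs, abs_of_nonneg hnonneg]
  exact hle.trans_lt (half_lt_self hε)

/-- `(M̄^b, d̄^b)` is complete: every Cauchy sequence of families in
`M̄^b` converges in `d̄^b` to a limit in `M̄^b`. -/
theorem Mb_complete
    {Ω : Type*} [MeasurableSpace Ω] [Nonempty Ω]
    (b : ℝ) (hb : 0 < b)
    (μs : ℕ → Ω → Measure Circle2pi)
    (hmem : ∀ n, MemMb b (μs n))
    (hcauchy : ∀ ε > (0:ℝ), ∃ N, ∀ i ≥ N, ∀ j ≥ N, dbarb (μs i) (μs j) < ε) :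
    ∃ μ : Ω → Measure Circle2pi, MemMb b μ ∧
      Tendsto (fun n => dbarb (μs n) μ) atTop (𝓝 0) :=
  Mb_complete_general b μs hmem hcauchy
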